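/- Let A be a ⊖-algebra and let X be the set of prime ideals of A, partially ordered by inclusion. Let τ↑ be the topology on X generated by the sets {x ∈ X | a ∈ x} for a ∈ A, and let τ↓ be the topology on X generated by the sets {x ∈ X | a ∉ x} for a ∈ A. Then the partial operation + (sending (x,y) ∈ dom(+) to x + y) is jointly upper continuous, i.e. continuous as a map from dom(+), equipped with the subspace topology of the product (X,τ↑) × (X,τ↑), to (X,τ↑); and the partial operation ⋆ (sending (x,y) ∈ dom(⋆) to x ⋆ y) is jointly lower continuous, i.e. continuous as a map from dom(⋆), equipped with the subspace topology of the product (X,τ↓) × (X,τ↓), to (X,τ↓). -/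
import Mathlib


class OminusAlgebra (A : Type*) extends DistribLattice A, BoundedOrder A where
  ominus : A → A → A
  inf_ominus : ∀ a b c : A, ominus (a ⊓ b) c = ominus a c ⊓ ominus b c
  sup_ominus : ∀ a b c : A, ominus (a ⊔ b) c = ominus a c ⊔ ominus b c
  ominus_inf : ∀ a b c : A, ominus a (b ⊓ c) = ominus a b ⊔ ominus a c
  ominus_sup : ∀ a b c : A, ominus a (b ⊔ c) = ominus a b ⊓ ominus a c
  bot_ominus : ∀ a : A, ominus ⊥ a = ⊥
  ominus_top : ∀ a : A, ominus a ⊤ = ⊥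
  ominus_bot : ∀ a : A, ominus a ⊥ = a

infixl:65 " ⊖ " => OminusAlgebra.ominus

variable {A : Type*} [OminusAlgebra A]

def oneg (a : A) : A := ⊤ ⊖ a

def oplus (a b : A) : A := oneg (oneg a ⊖ b)

def IsPrimeIdeal (x : Set A) : Prop :=
  x.Nonempty ∧ (∀ a b : A, a ≤ b → b ∈ x → a ∈ x) ∧
    (∀ a b : A, a ∈ x → b ∈ x → a ⊔ b ∈ x) ∧ x ≠ Set.univ ∧
    (∀ a b : A, a ⊓ b ∈ x → a ∈ x ∨ b ∈ x)

def ineg (x : Set A) : Set A := {a | oneg a ∉ x}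

def domPlus (x y : Set A) : Prop := y ⊆ ineg x

def pplus (x y : Set A) : Set A := {a | ∃ b ∈ y, a ⊖ b ∈ x}

def domStar (x y : Set A) : Prop := ¬ ineg x ⊆ y

def pstar (x y : Set A) : Set A := {a | ∀ b ∉ y, a ⊖ b ∈ x}

/-- The topology on the set of prime ideals of `A` generated by the sets `{x | a ∈ x}`. -/
def priUpTop (A : Type*) [OminusAlgebra A] :
    TopologicalSpace {x : Set A // IsPrimeIdeal x} :=
  TopologicalSpace.generateFrom
    {U | ∃ a : A, U = {x : {x : Set A // IsPrimeIdeal x} | a ∈ x.1}}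

/-- The topology on the set of prime ideals of `A` generated by the sets `{x | a ∉ x}`. -/
def priDownTop (A : Type*) [OminusAlgebra A] :
    TopologicalSpace {x : Set A // IsPrimeIdeal x} :=
  TopologicalSpace.generateFrom
    {U | ∃ a : A, U = {x : {x : Set A // IsPrimeIdeal x} | a ∉ x.1}}

/-- The subspace topology on `D ⊆ X × X` induced from the product of `(X, t)` with itself. -/
def subProdTop {X : Type*} (t : TopologicalSpace X) (D : Set (X × X)) :
    TopologicalSpace D :=
  TopologicalSpace.induced Subtype.val (@instTopologicalSpaceProd X X t t)

open Topology in
lemma upOpen {A : Type*} [OminusAlgebra A] (a : A) :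
    IsOpen[priUpTop A] {x : {x : Set A // IsPrimeIdeal x} | a ∈ x.1} :=
  TopologicalSpace.GenerateOpen.basic _ ⟨a, rfl⟩

open Topology in
lemma downOpen {A : Type*} [OminusAlgebra A] (a : A) :
    IsOpen[priDownTop A] {x : {x : Set A // IsPrimeIdeal x} | a ∉ x.1} :=
  TopologicalSpace.GenerateOpen.basic _ ⟨a, rfl⟩

theorem stmt17 {A : Type*} [OminusAlgebra A]
    (hplus : ∀ x y : {x : Set A // IsPrimeIdeal x}, domPlus x.1 y.1 →
      IsPrimeIdeal (pplus x.1 y.1))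
    (hstar : ∀ x y : {x : Set A // IsPrimeIdeal x}, domStar x.1 y.1 →
      IsPrimeIdeal (pstar x.1 y.1)) :
    @Continuous
      {q : {x : Set A // IsPrimeIdeal x} × {x : Set A // IsPrimeIdeal x} //
        domPlus q.1.1 q.2.1}
      {x : Set A // IsPrimeIdeal x}
      (subProdTop (priUpTop A) {q | domPlus q.1.1 q.2.1}) (priUpTop A)
      (fun q => ⟨pplus q.1.1.1 q.1.2.1, hplus q.1.1 q.1.2 q.2⟩) ∧
    @Continuous
      {q : {x : Set A // IsPrimeIdeal x} × {x : Set A // IsPrimeIdeal x} //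
        domStar q.1.1 q.2.1}
      {x : Set A // IsPrimeIdeal x}
      (subProdTop (priDownTop A) {q | domStar q.1.1 q.2.1}) (priDownTop A)
      (fun q => ⟨pstar q.1.1.1 q.1.2.1, hstar q.1.1 q.1.2 q.2⟩) := by
  constructor
  · letI t : TopologicalSpace {x : Set A // IsPrimeIdeal x} := priUpTop A
    letI tD := subProdTop (priUpTop A) {q : _ × _ | domPlus q.1.1 q.2.1}
    refine continuous_generateFrom_iff.mpr ?_
    rintro s ⟨a, rfl⟩
    refine isOpen_induced_iff.mpr
      ⟨⋃ b : A, {x : {x : Set A // IsPrimeIdeal x} | a ⊖ b ∈ x.1} ×ˢ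
        {y : {x : Set A // IsPrimeIdeal x} | b ∈ y.1}, ?_, ?_⟩
    · exact isOpen_iUnion fun b => (upOpen (a ⊖ b)).prod (upOpen b)
    · ext q
      simp only [Set.preimage_iUnion, Set.mem_iUnion, Set.mem_preimage,
        Set.mem_prod, Set.mem_setOf_eq, pplus]
      constructor
      · rintro ⟨b, h1, h2⟩; exact ⟨b, h2, h1⟩
      · rintro ⟨b, h1, h2⟩; exact ⟨b, h2, h1⟩
  · letI t : TopologicalSpace {x : Set A // IsPrimeIdeal x} := priDownTop A
    letI tD := subProdTop (priDownTop A) {q : _ × _ | domStar q.1.1 q.2.1}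
    refine continuous_generateFrom_iff.mpr ?_
    rintro s ⟨a, rfl⟩
    refine isOpen_induced_iff.mpr
      ⟨⋃ b : A, {x : {x : Set A // IsPrimeIdeal x} | a ⊖ b ∉ x.1} ×ˢ
        {y : {x : Set A // IsPrimeIdeal x} | b ∉ y.1}, ?_, ?_⟩
    · exact isOpen_iUnion fun b => (downOpen (a ⊖ b)).prod (downOpen b)
    · ext q
      simp only [Set.preimage_iUnion, Set.mem_iUnion, Set.mem_preimage,
        Set.mem_prod, Set.mem_setOf_eq, pstar]
      push_neg
      constructor
      · rintro ⟨b, h1, h2⟩; exact ⟨b, h2, h1⟩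
      · rintro ⟨b, h1, h2⟩; exact ⟨b, h2, h1⟩
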